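/- arXiv:1112.1223 — 2 statements merged into one kernel-verified Lean document; each statement's English description precedes it below -/
import Mathlib

section
/- Every finitely generated residually finite group is Hopfian, i.e., every surjective group homomorphism from the group to itself is injective. -/
/-!
Since `G` is finitely generated, there are only finitely many homomorphisms from `G` to a finite
group `F`. Precomposition with a surjective endomorphism `f` is injective on this finite set, hence
bijective, so every `φ : G →* F` factors through `f` and kills `ker f`. Residual finiteness then
forces `ker f` to be trivial.
-/

namespace MonoidHom

variable {G M : Type*} [Group G] [Monoid M]

theorem finite_of_fg [Group.FG G] [Finite M] : Finite (G →* M) := by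
  obtain ⟨S, hS⟩ := Group.FG.out (G := G)
  refine Finite.of_injective (fun φ : G →* M => fun s : S => φ s) fun φ ψ h => ?_
  exact eq_of_eqOn_dense hS fun x hx => congrFun h ⟨x, hx⟩

theorem exists_eq_comp_of_surjective [Group.FG G] [Finite M] {f : G →* G}
    (hf : Function.Surjective f) (φ : G →* M) : ∃ ψ : G →* M, φ = ψ.comp f := by
  have := finite_of_fg (G := G) (M := M)
  have hinj : Function.Injective fun ψ : G →* M => ψ.comp f := fun _ _ h => (cancel_right hf).mp h
  obtain ⟨ψ, hψ⟩ := Finite.surjective_of_injective hinj φ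
  exact ⟨ψ, hψ.symm⟩

theorem ker_le_ker_of_surjective [Group.FG G] [Finite M] {f : G →* G}
    (hf : Function.Surjective f) (φ : G →* M) : f.ker ≤ φ.ker := by
  obtain ⟨ψ, rfl⟩ := exists_eq_comp_of_surjective hf φ
  rw [← comap_ker]
  exact ker_le_comap f ψ.ker

end MonoidHom

theorem fg_residuallyFinite_hopfian (G : Type) [Group G]
    (hfg : Group.FG G)
    (hrf : ∀ g : G, g ≠ 1 → ∃ (F : Type) (_ : Group F) (_ : Finite F)
      (φ : G →* F), φ g ≠ 1)
    (f : G →* G) (hf : Function.Surjective f) :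
    Function.Injective f := by
  refine (injective_iff_map_eq_one f).mpr fun g hg => ?_
  by_contra hne
  obtain ⟨F, _, _, φ, hφ⟩ := hrf g hne
  exact hφ (MonoidHom.ker_le_ker_of_surjective hf φ hg)
end

section
/- Let H be a group generated by a finite set S, and let G = ⟨S ∣ R⟩ be a presented group together with an abstract isomorphism φ : G → H (not necessarily the canonical map). If H is Hopfian, then the kernel of the canonical surjection F(S) → H equals the normal closure of R in the free group F(S). -/
/-!
The canonical map `⟨S ∣ R⟩ → H` is surjective because `S` generates `H`. Precomposed with the
inverse of the abstract isomorphism it becomes a surjective endomorphism of `H`, hence injective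
by the Hopf property. So the canonical map is injective, and `F(S) → H`, which factors through it,
has the same kernel `⟪R⟫` as `F(S) → ⟨S ∣ R⟩`.
-/

open Function

theorem MonoidHom.injective_of_surjective_of_mulEquiv {G H : Type*} [MulOneClass G]
    [MulOneClass H] (hHopf : ∀ g : H →* H, Surjective g → Injective g) (e : G ≃* H)
    (f : G →* H) (hf : Surjective f) : Injective f := by
  have hfe : Injective (f.comp e.symm.toMonoidHom) := hHopf _ (hf.comp e.symm.surjective)
  simpa [comp_def] using hfe.comp e.injective

namespace PresentedGroup

variable {α G : Type*} [Group G] {f : α → G} {rels : Set (FreeGroup α)}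

theorem ker_mk (rels : Set (FreeGroup α)) : (mk rels).ker = Subgroup.normalClosure rels :=
  QuotientGroup.ker_mk' _

theorem toGroup_comp_mk (h : ∀ r ∈ rels, FreeGroup.lift f r = 1) :
    (toGroup h).comp (mk rels) = FreeGroup.lift f := by
  ext
  rfl

theorem range_toGroup (h : ∀ r ∈ rels, FreeGroup.lift f r = 1) :
    (toGroup h).range = Subgroup.closure (Set.range f) := by
  rw [MonoidHom.range_eq_map, ← closure_range_of, MonoidHom.map_closure, ← Set.range_comp]
  congr 2
  ext x
  exact toGroup.of h

theorem ker_lift_eq_normalClosure (h : ∀ r ∈ rels, FreeGroup.lift f r = 1)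
    (hinj : Injective (toGroup h)) : (FreeGroup.lift f).ker = Subgroup.normalClosure rels := by
  rw [← toGroup_comp_mk h, ← MonoidHom.comap_ker, (MonoidHom.ker_eq_bot_iff _).2 hinj,
    MonoidHom.comap_bot, ker_mk]

end PresentedGroup

theorem kernel_eq_normalClosure_of_hopfian_general (H : Type) [Group H]
    (S : Type) (ι : S → H)
    (hgen : Subgroup.closure (Set.range ι) = ⊤)
    (R : Set (FreeGroup S))
    (hR : ∀ r ∈ R, FreeGroup.lift ι r = 1)
    (hHopf : ∀ g : H →* H, Function.Surjective g → Function.Injective g)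
    (hiso : Nonempty (PresentedGroup R ≃* H)) :
    (FreeGroup.lift ι).ker = Subgroup.normalClosure R := by
  obtain ⟨e⟩ := hiso
  have hsurj : Surjective (PresentedGroup.toGroup hR) :=
    MonoidHom.range_eq_top.mp (by rw [PresentedGroup.range_toGroup, hgen])
  exact PresentedGroup.ker_lift_eq_normalClosure hR
    (MonoidHom.injective_of_surjective_of_mulEquiv hHopf e _ hsurj)

theorem kernel_eq_normalClosure_of_hopfian (H : Type) [Group H]
    (S : Type) [Finite S] (ι : S → H)
    (hgen : Subgroup.closure (Set.range ι) = ⊤)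
    (R : Set (FreeGroup S))
    (hR : ∀ r ∈ R, FreeGroup.lift ι r = 1)
    (hHopf : ∀ g : H →* H, Function.Surjective g → Function.Injective g)
    (hiso : Nonempty (PresentedGroup R ≃* H)) :
    (FreeGroup.lift ι).ker = Subgroup.normalClosure R :=
  kernel_eq_normalClosure_of_hopfian_general H S ι hgen R hR hHopf hiso
end
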